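/- arXiv:1404.0396 — 8 statements merged into one kernel-verified Lean document; each statement's English description precedes it below -/
import Mathlib

section
/- Suppose π is a d^p probability tensor generated by a weakly hierarchical log-linear model θ. For a permutation σ of V = {1,…,p} and each j = 1,…,p−1, let G_σ^{(j)} = {σ(j+1),…,σ(p)} and define B_{σ(j)} = { i ∈ I_{σ(j)} : there exists f ∈ G_σ^{(j)} and i_f ∈ I_f such that θ_{{σ(j),f}}(i, i_f) ≠ 0 }. Then rnk⁺_P(π) ≤ min over all permutations σ of ∏_{j=1}^{p−1} ( |B_{σ(j)}| + 1 ). -/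
/-- A nonnegative PARAFAC decomposition with `m` terms. -/
def IsParafacDecomp {p : ℕ} {d : Fin p → ℕ}
    (M : ((j : Fin p) → Fin (d j)) → ℝ) (m : ℕ) : Prop :=
  ∃ lam : Fin m → (j : Fin p) → Fin (d j) → ℝ,
    (∀ h j c, 0 ≤ lam h j c) ∧
    ∀ i : (j : Fin p) → Fin (d j), M i = ∑ h : Fin m, ∏ j : Fin p, lam h j (i j)

/-- The nonnegative PARAFAC rank. -/
noncomputable def parafacRank {p : ℕ} {d : Fin p → ℕ}
    (M : ((j : Fin p) → Fin (d j)) → ℝ) : ℕ :=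
  sInf {m | IsParafacDecomp M m}

/-- The probability tensor of the log-linear model `θ`:
`π i = exp (∑_{E ⊆ V} θ_E(i_E))`, normalized so that the entries sum to one. -/
noncomputable def loglinTensor {p : ℕ} {d : Fin p → ℕ}
    (θ : Finset (Fin p) → ((j : Fin p) → Fin (d j)) → ℝ) :
    ((j : Fin p) → Fin (d j)) → ℝ :=
  fun i => Real.exp (∑ E : Finset (Fin p), θ E i) /
    ∑ i' : (j : Fin p) → Fin (d j), Real.exp (∑ E : Finset (Fin p), θ E i')

/-!
Call two cells equivalent when, for every variable `v`, their levels of `v` either coincide or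
both lie outside `B_v`, the levels of `v` interacting with a variable later in the order `σ`.
Within a class each `θ_E` is additive across variables, anchored at any representative `r`:
if a cell differs from `r` at a variable `v ∈ E` preceding some `w ∈ E`, both levels of `v` lie
outside `B_v`, so `θ_{v,w}` and, by weak hierarchy, `θ_E` vanish at every cell with such a level
of `v`; otherwise the cell differs from `r` on `E` only at the last variable of `E`. Hence `π`
restricted to a class is a rank-one tensor, and the class indicator is a product of
coordinatewise indicators. Summing over the `∏ (|B_v| + 1)` classes gives the decomposition;
the last variable in the order has `B = ∅`.
-/

open Finset Function

section Parafac

variable {p : ℕ} {d : Fin p → ℕ}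

theorem isParafacDecomp_of_eq_sum_mul_prod {ι : Type*} [Fintype ι]
    {M : ((j : Fin p) → Fin (d j)) → ℝ} (j₀ : Fin p) (c : ι → ℝ)
    (f : ι → (j : Fin p) → Fin (d j) → ℝ) (hc : ∀ b, 0 ≤ c b) (hf : ∀ b j x, 0 ≤ f b j x)
    (hM : ∀ i, M i = ∑ b, c b * ∏ j, f b j (i j)) :
    IsParafacDecomp M (Nat.card ι) := by
  classical
  let e := Finite.equivFin ι
  refine ⟨fun h j x => (if j = j₀ then c (e.symm h) else 1) * f (e.symm h) j x,
    fun h j x => mul_nonneg (by split_ifs <;> simp [hc]) (hf _ _ _), fun i => ?_⟩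
  rw [hM, ← e.symm.sum_comp]
  simp only [prod_mul_distrib, prod_ite_eq', mem_univ, if_true]

theorem isParafacDecomp_zero_of_isEmpty [IsEmpty ((j : Fin p) → Fin (d j))]
    (M : ((j : Fin p) → Fin (d j)) → ℝ) : IsParafacDecomp M 0 :=
  ⟨fun h => h.elim0, fun h => h.elim0, fun i => isEmptyElim i⟩

end Parafac

theorem isParafacDecomp_loglinTensor_of_fin_zero {d : Fin 0 → ℕ}
    (θ : Finset (Fin 0) → ((j : Fin 0) → Fin (d j)) → ℝ) :
    IsParafacDecomp (loglinTensor θ) 1 := by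
  refine ⟨fun _ _ _ => 1, fun _ _ _ => zero_le_one, fun i => ?_⟩
  simp [loglinTensor, Unique.eq_default i]

section AnchoredExpansion

variable {ι α : Type*} [Fintype ι] [DecidableEq ι]

def anchoredExpansion (g : (ι → α) → ℝ) (r i : ι → α) : ℝ :=
  g r + ∑ w, (g (update r w (i w)) - g r)

theorem anchoredExpansion_sum {κ : Type*} (s : Finset κ) (g : κ → (ι → α) → ℝ) (r i : ι → α) :
    anchoredExpansion (fun x => ∑ E ∈ s, g E x) r i = ∑ E ∈ s, anchoredExpansion (g E) r i := by
  simp only [anchoredExpansion, sum_add_distrib, ← sum_sub_distrib]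
  rw [sum_comm]

theorem exp_anchoredExpansion (g : (ι → α) → ℝ) (r i : ι → α) :
    Real.exp (anchoredExpansion g r i) =
      Real.exp (g r) * ∏ w, Real.exp (g (update r w (i w)) - g r) := by
  rw [anchoredExpansion, Real.exp_add, Real.exp_sum]

theorem anchoredExpansion_eq_of_forall_eq_zero {g : (ι → α) → ℝ} {r i : ι → α} {S : Set α}
    {v : ι} (hg : ∀ x, x v ∉ S → g x = 0) (hi : i v ∉ S) (hr : r v ∉ S) :
    anchoredExpansion g r i = g i := by
  have hupd : ∀ w, g (update r w (i w)) = 0 := fun w => hg _ <| by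
    by_cases hw : v = w
    · subst hw; simpa
    · simpa [update_of_ne hw] using hr
  simp [anchoredExpansion, hupd, hg r hr, hg i hi]

theorem anchoredExpansion_eq_of_dependsOn {g : (ι → α) → ℝ} {r i : ι → α} {E : Set ι}
    (hg : DependsOn g E) (hir : ∀ v ∈ E, i v ≠ r v → ∀ w ∈ E, w ≠ v → i w = r w) :
    anchoredExpansion g r i = g i := by
  have hfixed : ∀ w, (w ∈ E → i w = r w) → g (update r w (i w)) = g r := fun w hw =>
    hg fun u hu => by
      by_cases huw : u = w
      · subst huw; simpa using hw hu
      · simp [update_of_ne huw]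
  by_cases hdiff : ∃ v ∈ E, i v ≠ r v
  · obtain ⟨v, hv, hne⟩ := hdiff
    have hi : g (update r v (i v)) = g i := hg fun u hu => by
      by_cases huv : u = v
      · subst huv; simp
      · simp [update_of_ne huv, hir v hv hne u hu huv]
    rw [anchoredExpansion, sum_eq_single v (fun w _ hwv => by
      rw [hfixed w fun hw => hir v hv hne w hw hwv, sub_self]) (by simp), hi]
    ring
  · push Not at hdiff
    simp [anchoredExpansion, hfixed _ (hdiff _), hg hdiff]

end AnchoredExpansion

open Classical in
noncomputable def collapseOutside {α : Type*} (S : Set α) (a : α) : Option S :=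
  if h : a ∈ S then some ⟨a, h⟩ else none

theorem notMem_of_collapseOutside_eq {α : Type*} {S : Set α} {a b : α}
    (h : collapseOutside S a = collapseOutside S b) (hab : a ≠ b) : a ∉ S ∧ b ∉ S := by
  by_cases ha : a ∈ S <;> by_cases hb : b ∈ S <;> simp_all [collapseOutside]

section LogLinear

variable {p d : ℕ} (θ : Finset (Fin p) → (Fin p → Fin d) → ℝ) (σ : Equiv.Perm (Fin p))

def IsWeaklyHierarchical : Prop :=
  ∀ (E F : Finset (Fin p)) (i i' : Fin p → Fin d),
    E ⊆ F → θ E i = 0 → (∀ j ∈ E, i' j = i j) → θ F i' = 0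

def logPotential (x : Fin p → Fin d) : ℝ := ∑ E, θ E x

def laterLevels (j : Fin p) : Set (Fin d) :=
  {c | ∃ k : Fin p, j < k ∧ ∃ x : Fin p → Fin d, x (σ j) = c ∧ θ {σ j, σ k} x ≠ 0}

/-- Indexed by variables rather than positions in `σ`, so that it is read off coordinatewise. -/
noncomputable def levelPattern (i : Fin p → Fin d) (v : Fin p) :
    Option (laterLevels θ σ (σ.symm v)) :=
  collapseOutside _ (i v)

theorem natCard_levelPatterns :
    Nat.card ((v : Fin p) → Option (laterLevels θ σ (σ.symm v))) =
      ∏ j ∈ univ.filter (fun j : Fin p => (j : ℕ) < p - 1), ((laterLevels θ σ j).ncard + 1) := by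
  rw [Nat.card_pi, ← Equiv.prod_comp σ]
  simp only [Equiv.symm_apply_apply, Finite.card_option, Nat.card_coe_set_eq]
  refine (prod_filter_of_ne fun j _ hj => ?_).symm
  obtain ⟨c, k, hjk, -⟩ := Set.nonempty_of_ncard_ne_zero (by simpa using hj)
  have := k.isLt
  omega

variable {θ σ}

theorem theta_eq_zero_of_notMem_laterLevels (hwh : IsWeaklyHierarchical θ)
    {E : Finset (Fin p)} {v w : Fin p} (hvw : σ.symm v < σ.symm w) (hv : v ∈ E) (hw : w ∈ E)
    {x : Fin p → Fin d} (hx : x v ∉ laterLevels θ σ (σ.symm v)) : θ E x = 0 := by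
  refine hwh {v, w} E x x (insert_subset hv (singleton_subset_iff.2 hw)) ?_ fun _ _ => rfl
  by_contra hpair
  exact hx ⟨σ.symm w, hvw, x, by simp, by simpa using hpair⟩

theorem anchoredExpansion_theta_eq (hdep : ∀ E, DependsOn (θ E) (E : Set (Fin p)))
    (hwh : IsWeaklyHierarchical θ) (E : Finset (Fin p)) {i r : Fin p → Fin d}
    (h : levelPattern θ σ i = levelPattern θ σ r) :
    anchoredExpansion (θ E) r i = θ E i := by
  by_cases hlate : ∃ v ∈ E, ∃ w ∈ E, σ.symm v < σ.symm w ∧ i v ≠ r v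
  · obtain ⟨v, hv, w, hw, hvw, hne⟩ := hlate
    obtain ⟨hi, hr⟩ := notMem_of_collapseOutside_eq (congrFun h v) hne
    exact anchoredExpansion_eq_of_forall_eq_zero
      (fun x hx => theta_eq_zero_of_notMem_laterLevels hwh hvw hv hw hx) hi hr
  · push Not at hlate
    refine anchoredExpansion_eq_of_dependsOn (hdep E) fun v hv hne w hw hwv => ?_
    rcases lt_trichotomy (σ.symm w) (σ.symm v) with hlt | heq | hgt
    · exact hlate w hw v hv hlt
    · exact absurd (σ.symm.injective heq) hwv
    · exact absurd (hlate v hv w hw hgt) hne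

theorem anchoredExpansion_logPotential_eq (hdep : ∀ E, DependsOn (θ E) (E : Set (Fin p)))
    (hwh : IsWeaklyHierarchical θ) {i r : Fin p → Fin d}
    (h : levelPattern θ σ i = levelPattern θ σ r) :
    anchoredExpansion (logPotential θ) r i = logPotential θ i :=
  (anchoredExpansion_sum univ θ r i).trans
    (sum_congr rfl fun E _ => anchoredExpansion_theta_eq hdep hwh E h)

variable (θ σ) [Nonempty (Fin p → Fin d)]

noncomputable def patternRep (b : (v : Fin p) → Option (laterLevels θ σ (σ.symm v))) :
    Fin p → Fin d :=
  invFun (levelPattern θ σ) b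

noncomputable def patternFactor (b : (v : Fin p) → Option (laterLevels θ σ (σ.symm v)))
    (v : Fin p) (c : Fin d) : ℝ :=
  if collapseOutside _ c = b v then
    Real.exp (logPotential θ (update (patternRep θ σ b) v c) - logPotential θ (patternRep θ σ b))
  else 0

theorem prod_patternFactor (b : (v : Fin p) → Option (laterLevels θ σ (σ.symm v)))
    (i : Fin p → Fin d) :
    ∏ v, patternFactor θ σ b v (i v) =
      if levelPattern θ σ i = b then
        ∏ v, Real.exp (logPotential θ (update (patternRep θ σ b) v (i v)) -
          logPotential θ (patternRep θ σ b))
      else 0 := by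
  by_cases h : levelPattern θ σ i = b
  · rw [if_pos h]
    exact prod_congr rfl fun v _ => if_pos (congrFun h v)
  · obtain ⟨v, hv⟩ := Function.ne_iff.1 h
    rw [if_neg h]
    exact prod_eq_zero (mem_univ v) (if_neg hv)

open Classical in
theorem loglinTensor_eq_sum_patterns (hdep : ∀ E, DependsOn (θ E) (E : Set (Fin p)))
    (hwh : IsWeaklyHierarchical θ) (i : Fin p → Fin d) :
    loglinTensor (d := fun _ => d) θ i =
      ∑ b, Real.exp (logPotential θ (patternRep θ σ b)) /
        (∑ i', Real.exp (logPotential θ i')) * ∏ v, patternFactor θ σ b v (i v) := by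
  simp only [prod_patternFactor, mul_ite, mul_zero, sum_ite_eq, mem_univ, if_true]
  have hrep : levelPattern θ σ (patternRep θ σ (levelPattern θ σ i)) = levelPattern θ σ i :=
    invFun_eq ⟨i, rfl⟩
  rw [div_mul_eq_mul_div, ← exp_anchoredExpansion,
    anchoredExpansion_logPotential_eq hdep hwh hrep.symm]
  rfl

end LogLinear

/-- Theorem 1: if `π` is the `d^p` probability tensor of a weakly hierarchical log-linear
model `θ`, then for every permutation `σ` of the variables, the nonnegative PARAFAC rank
of `π` is at most `∏_{j=1}^{p-1} (|B_{σ(j)}| + 1)`, where `B_{σ(j)}` is the set of levels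
of variable `σ(j)` sharing a nonzero two-way interaction with some variable appearing
later in the order `σ`.  (Hence the rank is at most the minimum of this bound over σ.) -/
theorem parafacRank_le_weaklyHierarchical_bound {p d : ℕ}
    (θ : Finset (Fin p) → (Fin p → Fin d) → ℝ)
    (hdep : ∀ (E : Finset (Fin p)) (i i' : Fin p → Fin d),
      (∀ j ∈ E, i j = i' j) → θ E i = θ E i')
    (hwh : ∀ (E F : Finset (Fin p)) (i i' : Fin p → Fin d),
      E ⊆ F → θ E i = 0 → (∀ j ∈ E, i' j = i j) → θ F i' = 0)
    (σ : Equiv.Perm (Fin p)) :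
    parafacRank (d := fun _ => d) (loglinTensor (d := fun _ => d) θ) ≤
      ∏ j ∈ Finset.univ.filter (fun j : Fin p => (j : ℕ) < p - 1),
        (({c : Fin d | ∃ k : Fin p, j < k ∧ ∃ x : Fin p → Fin d,
            x (σ j) = c ∧ θ {σ j, σ k} x ≠ 0}).ncard + 1) := by
  rcases Nat.eq_zero_or_pos p with rfl | hp
  · exact (Nat.sInf_le (isParafacDecomp_loglinTensor_of_fin_zero θ)).trans (by simp)
  cases isEmpty_or_nonempty (Fin p → Fin d)
  · exact (Nat.sInf_le (isParafacDecomp_zero_of_isEmpty _)).trans (Nat.zero_le _)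
  have hfactor : ∀ b v c, 0 ≤ patternFactor θ σ b v c := fun b v c => by
    unfold patternFactor
    split_ifs <;> positivity
  classical
  exact (Nat.sInf_le (isParafacDecomp_of_eq_sum_mul_prod ⟨0, hp⟩ _ _ (fun _ => by positivity)
    hfactor (loglinTensor_eq_sum_patterns θ σ (fun E _ _ => hdep E _ _) hwh))).trans_eq
    (natCard_levelPatterns θ σ)
end

section
/- For a weakly hierarchical log-linear model θ and a collection H = (H_1,…,H_p) of subsets H_j ⊆ I_j, the following are equivalent: (i) for every (E, i_E) with |E| ≥ 2 and θ_E(i_E) ≠ 0 there exists j ∈ E with i_j ∈ H_j; (ii) for every pair {j, j'} ⊆ V and levels (i_j, i_{j'}) with θ_{{j,j'}}(i_j, i_{j'}) ≠ 0, either i_j ∈ H_j or i_{j'} ∈ H_{j'} . That is, under weak hierarchicality, H covers all nonzero interactions of order ≥ 2 if and only if H covers all nonzero two-way interactions. -/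
/-- Remark 3: for a weakly hierarchical log-linear model `θ` and a collection
`H = (H_1,…,H_p)` of level sets, `H` covers all nonzero interactions of order at least
two if and only if `H` covers all nonzero two-way interactions.  Here `θ E i` depends
only on the coordinates of the cell `i` in `E` (hypothesis `hdep`). -/
theorem cover_iff_cover_twoway {p : ℕ} {d : Fin p → ℕ}
    (θ : Finset (Fin p) → ((j : Fin p) → Fin (d j)) → ℝ)
    (hdep : ∀ (E : Finset (Fin p)) (i i' : (j : Fin p) → Fin (d j)),
      (∀ j ∈ E, i j = i' j) → θ E i = θ E i')
    (hwh : ∀ (E F : Finset (Fin p)) (i i' : (j : Fin p) → Fin (d j)),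
      E ⊆ F → θ E i = 0 → (∀ j ∈ E, i' j = i j) → θ F i' = 0)
    (H : (j : Fin p) → Finset (Fin (d j))) :
    (∀ (E : Finset (Fin p)) (i : (j : Fin p) → Fin (d j)),
        2 ≤ E.card → θ E i ≠ 0 → ∃ j ∈ E, i j ∈ H j) ↔
      (∀ (j j' : Fin p) (i : (k : Fin p) → Fin (d k)),
        j ≠ j' → θ {j, j'} i ≠ 0 → i j ∈ H j ∨ i j' ∈ H j') := by
  constructor
  · intro h j j' i hjj hθ
    have hcard : ({j, j'} : Finset (Fin p)).card = 2 := Finset.card_pair hjj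
    obtain ⟨k, hk, hkH⟩ := h {j, j'} i (by omega) hθ
    rcases Finset.mem_insert.mp hk with rfl | hk
    · exact Or.inl hkH
    · rcases Finset.mem_singleton.mp hk with rfl
      exact Or.inr hkH
  · intro h E i hE hθ
    obtain ⟨j, hj, j', hj', hjj⟩ := Finset.one_lt_card.mp (by omega : 1 < E.card)
    have hsub : ({j, j'} : Finset (Fin p)) ⊆ E := by
      intro k hk
      rcases Finset.mem_insert.mp hk with rfl | hk
      · exact hj
      · rcases Finset.mem_singleton.mp hk with rfl; exact hj'
    have hpair : θ {j, j'} i ≠ 0 := fun h0 => hθ (hwh _ _ i i hsub h0 (fun _ _ => rfl))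
    rcases h j j' i hjj hpair with hH | hH
    · exact ⟨j, hj, hH⟩
    · exact ⟨j', hj', hH⟩
end

section
/- Suppose π is a d^p probability tensor generated by a weakly hierarchical log-linear model θ such that |C_θ^{(j)}| < m − 1 for all j ∈ V, where m ≥ 2. Then rnk⁺_P(π) < m^{p−1}. -/
/-- `C_θ^{(j)}`: the set of levels of variable `j` sharing a nonzero two-way interaction
with some other variable. -/
def interactingLevels {p d : ℕ} (θ : Finset (Fin p) → (Fin p → Fin d) → ℝ)
    (j : Fin p) : Set (Fin d) :=
  {c | ∃ j' : Fin p, j' ≠ j ∧ ∃ x : Fin p → Fin d, x j = c ∧ θ {j, j'} x ≠ 0}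

/-!
Weak hierarchy forces every interaction `θ_E` with `|E| ≥ 2` to vanish at cells where some
`i_j` (`j ∈ E`) lies outside `C_θ^{(j)}`. Hence the non-main-effect part of the log-density
only sees each coordinate through a map `φ_j : I_j → Fin (m - 1)` that is injective on
`C_θ^{(j)}` and sends all other levels to one spare value. So `π` is a rank-one tensor of main
effects times `F (φ_1(i_1), …, φ_p(i_p))` with `F ≥ 0`, and such a tensor has nonnegative
rank at most `(m - 1)^(p - 1)`: fix the last `p - 1` collapsed coordinates and let the first
factor carry `F`.
-/

section Parafac

variable {p : ℕ} {d : Fin p → ℕ}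

theorem IsParafacDecomp.parafacRank_le {M : ((j : Fin p) → Fin (d j)) → ℝ} {m : ℕ}
    (h : IsParafacDecomp M m) : parafacRank M ≤ m :=
  Nat.sInf_le h

theorem isParafacDecomp_of_equiv {M : ((j : Fin p) → Fin (d j)) → ℝ} {ι : Type*} [Fintype ι]
    {m : ℕ} (e : ι ≃ Fin m) (lam : ι → (j : Fin p) → Fin (d j) → ℝ)
    (hlam : ∀ t j c, 0 ≤ lam t j c) (hM : ∀ i, M i = ∑ t, ∏ j, lam t j (i j)) :
    IsParafacDecomp M m :=
  ⟨fun h => lam (e.symm h), fun _ _ _ => hlam _ _ _, fun i => by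
    rw [hM i]; exact (e.symm.sum_comp fun t => ∏ j, lam t j (i j)).symm⟩

theorem IsParafacDecomp.prod_mul {M : ((j : Fin p) → Fin (d j)) → ℝ} {m : ℕ}
    (h : IsParafacDecomp M m) {u : (j : Fin p) → Fin (d j) → ℝ} (hu : ∀ j c, 0 ≤ u j c) :
    IsParafacDecomp (fun i => (∏ j, u j (i j)) * M i) m := by
  obtain ⟨lam, hlam, hM⟩ := h
  refine ⟨fun h j c => u j c * lam h j c, fun h j c => mul_nonneg (hu j c) (hlam h j c),
    fun i => ?_⟩
  simp only [hM i, Finset.mul_sum, Finset.prod_mul_distrib]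

end Parafac

theorem isParafacDecomp_comp {q k : ℕ} {d : Fin (q + 1) → ℕ}
    (φ : (j : Fin (q + 1)) → Fin (d j) → Fin k) (F : (Fin (q + 1) → Fin k) → ℝ)
    (hF : ∀ s, 0 ≤ F s) :
    IsParafacDecomp (fun i => F fun j => φ j (i j)) (k ^ q) := by
  let lam : (Fin q → Fin k) → (j : Fin (q + 1)) → Fin (d j) → ℝ := fun t =>
    Fin.cons (fun c => F (Fin.cons (φ 0 c) t)) fun j c => if φ j.succ c = t j then 1 else 0
  refine isParafacDecomp_of_equiv finFunctionFinEquiv lam (fun t j c => ?_) fun i => ?_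
  · cases j using Fin.cases with
    | zero => exact hF _
    | succ j => simp only [lam, Fin.cons_succ]; split_ifs <;> norm_num
  · simp only [lam, Fin.prod_univ_succ, Fin.cons_zero, Fin.cons_succ]
    rw [Finset.sum_eq_single (fun j => φ j.succ (i j.succ))]
    · simp only [if_true, Finset.prod_const_one, mul_one]
      congr 1
      ext j
      cases j using Fin.cases <;> rfl
    · intro t _ ht
      obtain ⟨j, hj⟩ := Function.ne_iff.1 ht
      rw [Finset.prod_eq_zero (Finset.mem_univ j) (if_neg (Ne.symm hj)), mul_zero]
    · exact fun h => absurd (Finset.mem_univ _) h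

theorem Set.Finite.exists_fin_preimage_singleton {α : Type*} {S : Set α} (hS : S.Finite)
    {k : ℕ} (hk : S.ncard < k) : ∃ φ : α → Fin k, ∀ c ∈ S, φ ⁻¹' {φ c} = {c} := by
  classical
  obtain ⟨n, rfl⟩ : ∃ n, k = n + 1 := ⟨k - 1, by omega⟩
  have hcard : Fintype.card hS.toFinset ≤ Fintype.card (Fin n) := by
    rw [Fintype.card_coe, Fintype.card_fin, ← Set.ncard_eq_toFinset_card S hS]
    omega
  obtain ⟨f⟩ := Function.Embedding.nonempty_of_card_le hcard
  refine ⟨fun c => if h : c ∈ hS.toFinset then (f ⟨c, h⟩).castSucc else Fin.last n,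
    fun c hc => Set.eq_singleton_iff_unique_mem.2 ⟨rfl, fun c' hc' => ?_⟩⟩
  have hc₁ : c ∈ hS.toFinset := hS.mem_toFinset.2 hc
  simp only [Set.mem_preimage, Set.mem_singleton_iff, dif_pos hc₁] at hc'
  split_ifs at hc' with hc₂
  · exact congrArg Subtype.val (f.injective (Fin.castSucc_injective _ hc'))
  · exact absurd hc'.symm (Fin.castSucc_lt_last _).ne

theorem Finset.sum_univ_eq_sum_singleton_add {α M : Type*} [Fintype α] [DecidableEq α]
    [AddCommMonoid M] (f : Finset α → M) :
    ∑ E, f E = ∑ j, f {j} + ∑ E with E.card ≠ 1, f E := by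
  rw [← Finset.sum_filter_add_sum_filter_not _ fun E : Finset α => E.card = 1]
  congr 1
  rw [← Finset.powerset_univ, ← Finset.powersetCard_eq_filter, Finset.powersetCard_one,
    Finset.sum_map]
  rfl

section LogLinear

variable {p d : ℕ} (θ : Finset (Fin p) → (Fin p → Fin d) → ℝ)

noncomputable def nonsingletonSum (i : Fin p → Fin d) : ℝ :=
  ∑ E with E.card ≠ 1, θ E i

theorem loglinTensor_eq_prod_mul
    (hdep : ∀ (E : Finset (Fin p)) (i i' : Fin p → Fin d),
      (∀ j ∈ E, i j = i' j) → θ E i = θ E i') (i : Fin p → Fin d) :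
    loglinTensor (d := fun _ => d) θ i =
      (∏ j, Real.exp (θ {j} fun _ => i j)) *
        (Real.exp (nonsingletonSum θ i) /
          ∑ i' : Fin p → Fin d, Real.exp (∑ E : Finset (Fin p), θ E i')) := by
  have hsingle : ∀ j, θ {j} (fun _ => i j) = θ {j} i := fun j =>
    hdep {j} _ _ fun j' hj' => by rw [Finset.mem_singleton.1 hj']
  simp only [loglinTensor, nonsingletonSum, hsingle, Finset.sum_univ_eq_sum_singleton_add,
    Real.exp_add, Real.exp_sum]
  ring

variable {θ}

theorem eq_zero_of_notMem_interactingLevels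
    (hwh : ∀ (E F : Finset (Fin p)) (i i' : Fin p → Fin d),
      E ⊆ F → θ E i = 0 → (∀ j ∈ E, i' j = i j) → θ F i' = 0)
    {E : Finset (Fin p)} (hE : 2 ≤ E.card) {j : Fin p} (hj : j ∈ E) {i : Fin p → Fin d}
    (hi : i j ∉ interactingLevels θ j) : θ E i = 0 := by
  obtain ⟨j', hj'E, hj'j⟩ := Finset.exists_mem_ne (by omega : 1 < E.card) j
  have hpair : θ {j, j'} i = 0 := by
    by_contra hne
    exact hi ⟨j', hj'j, i, rfl, hne⟩
  exact hwh {j, j'} E i i (Finset.insert_subset hj (Finset.singleton_subset_iff.2 hj'E))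
    hpair fun _ _ => rfl

theorem nonsingletonSum_factorsThrough
    (hdep : ∀ (E : Finset (Fin p)) (i i' : Fin p → Fin d),
      (∀ j ∈ E, i j = i' j) → θ E i = θ E i')
    (hwh : ∀ (E F : Finset (Fin p)) (i i' : Fin p → Fin d),
      E ⊆ F → θ E i = 0 → (∀ j ∈ E, i' j = i j) → θ F i' = 0)
    {k : ℕ} {φ : Fin p → Fin d → Fin k}
    (hφ : ∀ j, ∀ c ∈ interactingLevels θ j, φ j ⁻¹' {φ j c} = {c}) :
    (nonsingletonSum θ).FactorsThrough fun i j => φ j (i j) := by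
  intro i i' hii'
  have hsep : ∀ j, ∀ c ∈ interactingLevels θ j, ∀ c', φ j c' = φ j c → c' = c :=
    fun j c hc c' h => Set.eq_of_mem_singleton (hφ j c hc ▸ Set.mem_preimage.2 h)
  refine Finset.sum_congr rfl fun E hE => ?_
  by_cases hall : ∀ j ∈ E, i j ∈ interactingLevels θ j
  · exact hdep E i i' fun j hj => (hsep j _ (hall j hj) _ (congrFun hii' j).symm).symm
  · push Not at hall
    obtain ⟨j, hjE, hij⟩ := hall
    have hE2 : 2 ≤ E.card := by
      have := (Finset.mem_filter.1 hE).2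
      have := Finset.card_pos.2 ⟨j, hjE⟩
      omega
    have hi'j : i' j ∉ interactingLevels θ j := fun hmem =>
      hij (hsep j _ hmem _ (congrFun hii' j) ▸ hmem)
    rw [eq_zero_of_notMem_interactingLevels hwh hE2 hjE hij,
      eq_zero_of_notMem_interactingLevels hwh hE2 hjE hi'j]

theorem isParafacDecomp_loglinTensor {q k : ℕ}
    {θ : Finset (Fin (q + 1)) → (Fin (q + 1) → Fin d) → ℝ}
    (hdep : ∀ (E : Finset (Fin (q + 1))) (i i' : Fin (q + 1) → Fin d),
      (∀ j ∈ E, i j = i' j) → θ E i = θ E i')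
    (hwh : ∀ (E F : Finset (Fin (q + 1))) (i i' : Fin (q + 1) → Fin d),
      E ⊆ F → θ E i = 0 → (∀ j ∈ E, i' j = i j) → θ F i' = 0)
    (hC : ∀ j, (interactingLevels θ j).ncard < k) :
    IsParafacDecomp (d := fun _ => d) (loglinTensor (d := fun _ => d) θ) (k ^ q) := by
  choose φ hφ using fun j => (Set.toFinite (interactingLevels θ j)).exists_fin_preimage_singleton
    (hC j)
  set Z := ∑ i' : Fin (q + 1) → Fin d, Real.exp (∑ E : Finset (Fin (q + 1)), θ E i')
  let F : (Fin (q + 1) → Fin k) → ℝ := fun s =>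
    Real.exp (Function.extend (fun i j => φ j (i j)) (nonsingletonSum θ) 0 s) / Z
  have hZ : 0 ≤ Z := Finset.sum_nonneg fun _ _ => (Real.exp_pos _).le
  have hπ : loglinTensor (d := fun _ => d) θ =
      fun i => (∏ j, Real.exp (θ {j} fun _ => i j)) * F fun j => φ j (i j) := by
    ext i
    rw [loglinTensor_eq_prod_mul θ hdep]
    congr 3
    exact ((nonsingletonSum_factorsThrough hdep hwh hφ).extend_apply 0 i).symm
  rw [hπ]
  exact (isParafacDecomp_comp φ F fun s => div_nonneg (Real.exp_pos _).le hZ).prod_mul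
    (u := fun j c => Real.exp (θ {j} fun _ => c)) fun _ _ => (Real.exp_pos _).le

end LogLinear

/-- Corollary 1: if `π` is the `d^p` probability tensor (with `p ≥ 2` variables) of a
weakly hierarchical log-linear model `θ` with `|C_θ^{(j)}| < m − 1` for all `j`, where
`m ≥ 2`, then the nonnegative PARAFAC rank of `π` is strictly less than `m^{p−1}`. -/
theorem parafacRank_lt_pow {p d m : ℕ} (hp : 2 ≤ p) (hm : 2 ≤ m)
    (θ : Finset (Fin p) → (Fin p → Fin d) → ℝ)
    (hdep : ∀ (E : Finset (Fin p)) (i i' : Fin p → Fin d),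
      (∀ j ∈ E, i j = i' j) → θ E i = θ E i')
    (hwh : ∀ (E F : Finset (Fin p)) (i i' : Fin p → Fin d),
      E ⊆ F → θ E i = 0 → (∀ j ∈ E, i' j = i j) → θ F i' = 0)
    (hC : ∀ j : Fin p, (interactingLevels θ j).ncard < m - 1) :
    parafacRank (d := fun _ => d) (loglinTensor (d := fun _ => d) θ) < m ^ (p - 1) := by
  obtain ⟨q, rfl⟩ : ∃ q, p = q + 1 := ⟨p - 1, by omega⟩
  calc parafacRank (d := fun _ => d) (loglinTensor (d := fun _ => d) θ)
      ≤ (m - 1) ^ q := (isParafacDecomp_loglinTensor hdep hwh hC).parafacRank_le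
    _ < m ^ (q + 1 - 1) := by
      rw [Nat.add_sub_cancel]
      exact Nat.pow_lt_pow_left (by omega) (by omega)
end

section
/- Suppose π is a d^p probability tensor generated by a weakly hierarchical log-linear model θ with |C_θ^{(j)}| < m − 1 for all j ∈ V, where m ≥ 2. Let J ⊆ V be such that the variables outside J are conditionally independent given the variables in J, expressed in the log-linear parameterization as: θ_E ≡ 0 (i.e. θ_E(i_E) = 0 for all i_E) for every E ⊆ V with |E ∩ (V∖J)| ≥ 2. Then rnk⁺_P(π) ≤ m^{|J|}. -/
/-- Corollary 2: suppose `π` is the `d^p` probability tensor of a weakly hierarchical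
log-linear model `θ` with `|C_θ^{(j)}| < m − 1` for all `j`, where `m ≥ 2`, and suppose
the variables outside `J` are conditionally independent given the variables in `J`,
expressed in the log-linear parameterization as: `θ_E ≡ 0` for every `E` with
`|E ∩ (V∖J)| ≥ 2`.  Then the nonnegative PARAFAC rank of `π` is at most `m^{|J|}`. -/
theorem parafacRank_le_pow_card_condIndep {p d m : ℕ} (hm : 2 ≤ m)
    (θ : Finset (Fin p) → (Fin p → Fin d) → ℝ)
    (hdep : ∀ (E : Finset (Fin p)) (i i' : Fin p → Fin d),
      (∀ j ∈ E, i j = i' j) → θ E i = θ E i')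
    (hwh : ∀ (E F : Finset (Fin p)) (i i' : Fin p → Fin d),
      E ⊆ F → θ E i = 0 → (∀ j ∈ E, i' j = i j) → θ F i' = 0)
    (hC : ∀ j : Fin p, (interactingLevels θ j).ncard < m - 1)
    (J : Finset (Fin p))
    (hJ : ∀ E : Finset (Fin p), 2 ≤ (E \ J).card → ∀ i : Fin p → Fin d, θ E i = 0) :
    parafacRank (d := fun _ => d) (loglinTensor (d := fun _ => d) θ) ≤ m ^ J.card := by
  classical
  have main : ∃ lam : (↥J → Fin m) → (j : Fin p) → Fin d → ℝ,
      (∀ h j c, 0 ≤ lam h j c) ∧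
      ∀ i : Fin p → Fin d, loglinTensor (d := fun _ => d) θ i
        = ∑ h : ↥J → Fin m, ∏ j : Fin p, lam h j (i j) := by
    rcases Nat.eq_zero_or_pos p with hp | hp
    · -- p = 0
      subst hp
      refine ⟨fun _ _ _ => 1, fun _ _ _ => zero_le_one, fun i => ?_⟩
      have hJ0 : J = ∅ := Finset.eq_empty_of_forall_notMem fun x => x.elim0
      have hi : ∀ i' : Fin 0 → Fin d, i' = i := fun i' => funext fun j => j.elim0
      have h1 : ∑ i' : Fin 0 → Fin d, Real.exp (∑ E : Finset (Fin 0), θ E i')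
          = Real.exp (∑ E : Finset (Fin 0), θ E i) :=
        Finset.sum_eq_single i (fun b _ hb => absurd (hi b) hb)
          (fun h => absurd (Finset.mem_univ i) h)
      simp only [loglinTensor]
      rw [h1, div_self (Real.exp_ne_zero _)]
      have hu : ∀ h h' : ↥J → Fin m, h = h' :=
        fun h h' => funext fun j => absurd j.2 (by simp [hJ0])
      have h₀ : (↥J → Fin m) := fun _ => ⟨0, by omega⟩
      rw [Finset.sum_eq_single h₀ (fun b _ hb => absurd (hu b h₀) hb)
        (fun h => absurd (Finset.mem_univ h₀) h)]
      simp
    rcases Nat.eq_zero_or_pos d with hd | hd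
    · -- d = 0
      subst hd
      exact ⟨fun _ _ _ => 0, fun _ _ _ => le_refl 0, fun i => (i ⟨0, hp⟩).elim0⟩
    -- main case : p > 0, d > 0
    haveI hne : Nonempty (Fin d) := ⟨⟨0, hd⟩⟩
    -- collapse maps
    have hphi : ∀ j : Fin p, ∃ φ : Fin d → Fin m,
        ∀ c c' : Fin d, c ∈ interactingLevels θ j → φ c = φ c' →
          c' ∈ interactingLevels θ j ∧ c = c' := by
      intro j
      set Cf : Finset (Fin d) := Finset.univ.filter (· ∈ interactingLevels θ j) with hCf
      have hcard : Cf.card < m - 1 := by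
        have h1 : (interactingLevels θ j).ncard = Cf.card := by
          rw [Set.ncard_eq_toFinset_card']
          congr 1
          ext c
          simp [hCf]
        rw [← h1]; exact hC j
      set ψ := (Cf.orderIsoOfFin rfl).symm with hψ
      refine ⟨fun c => if h : c ∈ Cf then
          ⟨(ψ ⟨c, h⟩ : Fin Cf.card).val,
            lt_of_lt_of_le (ψ ⟨c, h⟩).isLt (by omega)⟩
        else ⟨m - 1, by omega⟩, ?_⟩
      intro c c' hc heq
      dsimp only at heq
      have hcCf : c ∈ Cf := by simp [hCf, hc]
      by_cases hc' : c' ∈ Cf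
      · rw [dif_pos hcCf, dif_pos hc'] at heq
        have hval := congrArg Fin.val heq
        have h2 : (ψ ⟨c, hcCf⟩ : Fin Cf.card) = ψ ⟨c', hc'⟩ := Fin.ext hval
        have h3 := ψ.injective h2
        refine ⟨by simpa [hCf] using hc', Subtype.ext_iff.mp h3⟩
      · rw [dif_pos hcCf, dif_neg hc'] at heq
        have h4 := congrArg Fin.val heq
        simp only at h4
        have := (ψ ⟨c, hcCf⟩).isLt
        omega
    choose φ hφ using hphi
    -- zero lemma
    have hzero : ∀ (E : Finset (Fin p)) (i : Fin p → Fin d), 2 ≤ E.card →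
        ∀ j₀ ∈ E, i j₀ ∉ interactingLevels θ j₀ → θ E i = 0 := by
      intro E i hE j₀ hj₀E hj₀
      obtain ⟨j₁, hj₁E, hne₁⟩ := Finset.exists_mem_ne (lt_of_lt_of_le one_lt_two hE) j₀
      have h2 : θ {j₀, j₁} i = 0 := by
        by_contra h
        exact hj₀ ⟨j₁, hne₁, i, rfl, h⟩
      exact hwh {j₀, j₁} E i i
        (Finset.insert_subset_iff.mpr ⟨hj₀E, Finset.singleton_subset_iff.mpr hj₁E⟩)
        h2 (fun _ _ => rfl)
    -- collapse-invariance of high-order terms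
    have lemC : ∀ (E : Finset (Fin p)) (i i' : Fin p → Fin d), 2 ≤ E.card →
        (∀ j ∈ E, φ j (i j) = φ j (i' j)) → θ E i = θ E i' := by
      intro E i i' hE hag
      by_cases hall : ∀ j ∈ E, i j ∈ interactingLevels θ j
      · exact hdep E i i' (fun j hj => (hφ j (i j) (i' j) (hall j hj) (hag j hj)).2)
      · push_neg at hall
        obtain ⟨j, hjE, hjC⟩ := hall
        have h2 : i' j ∉ interactingLevels θ j := fun hc =>
          hjC (hφ j (i' j) (i j) hc (hag j hjE).symm).1
        rw [hzero E i hE j hjE hjC, Eq.comm]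
        exact hzero E i' hE j hjE h2
    -- normalizer
    set Z := ∑ i' : Fin p → Fin d, Real.exp (∑ E : Finset (Fin p), θ E i') with hZ
    have hZpos : 0 < Z :=
      Finset.sum_pos (fun i _ => Real.exp_pos _) ⟨fun _ => ⟨0, hd⟩, Finset.mem_univ _⟩
    -- representatives
    set rep : (↥J → Fin m) → Fin p → Fin d := fun h j =>
      if hj : j ∈ J then Function.invFun (φ j) (h ⟨j, hj⟩) else ⟨0, hd⟩ with hrep
    have hrepφ : ∀ (i : Fin p → Fin d) (j : Fin p), j ∈ J →
        φ j (rep (fun jj : ↥J => φ jj.1 (i jj.1)) j) = φ j (i j) := by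
      intro i j hj
      simp only [hrep, dif_pos hj]
      exact Function.invFun_eq ⟨i j, rfl⟩
    -- index sets
    set T₁ : Finset (Finset (Fin p)) := J.powerset.filter (fun E => E.card ≠ 1) with hT₁
    set T₂ : Finset (Finset (Fin p)) := J.image (fun j => {j}) with hT₂
    set T₃ : Finset (Finset (Fin p)) := (Jᶜ ×ˢ J.powerset).image (fun q => insert q.1 q.2) with hT₃
    have hsplit : ∀ i : Fin p → Fin d, ∑ E : Finset (Fin p), θ E i =
        (∑ E ∈ T₁, θ E i) + ((∑ j ∈ J, θ {j} i)
          + (∑ j ∈ Jᶜ, ∑ E₀ ∈ J.powerset, θ (insert j E₀) i)) := by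
      intro i
      have hd12 : Disjoint T₁ T₂ := by
        rw [Finset.disjoint_left]
        intro E h1 h2
        rw [hT₂] at h2
        obtain ⟨j, hj, rfl⟩ := Finset.mem_image.mp h2
        rw [hT₁] at h1
        have := (Finset.mem_filter.mp h1).2
        simp at this
      have hd123 : Disjoint (T₁ ∪ T₂) T₃ := by
        rw [Finset.disjoint_left]
        intro E h1 h3
        rw [hT₃] at h3
        obtain ⟨q, hq, rfl⟩ := Finset.mem_image.mp h3
        have hq1 : q.1 ∉ J := by simpa using (Finset.mem_product.mp hq).1
        have hEJ : insert q.1 q.2 ⊆ J := by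
          rcases Finset.mem_union.mp h1 with h | h
          · rw [hT₁] at h
            exact Finset.mem_powerset.mp (Finset.mem_filter.mp h).1
          · rw [hT₂] at h
            obtain ⟨j, hj, hEq⟩ := Finset.mem_image.mp h
            rw [← hEq]
            exact Finset.singleton_subset_iff.mpr hj
        exact hq1 (hEJ (Finset.mem_insert_self _ _))
      have hinj3 : ∀ q ∈ Jᶜ ×ˢ J.powerset, ∀ q' ∈ Jᶜ ×ˢ J.powerset,
          insert q.1 q.2 = insert q'.1 q'.2 → q = q' := by
        intro q hq q' hq' heq
        obtain ⟨hq1, hq2⟩ := Finset.mem_product.mp hq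
        obtain ⟨hq1', hq2'⟩ := Finset.mem_product.mp hq'
        rw [Finset.mem_compl] at hq1 hq1'
        rw [Finset.mem_powerset] at hq2 hq2'
        have h11 : q'.1 = q.1 := by
          have hmem : q'.1 ∈ insert q.1 q.2 := heq ▸ Finset.mem_insert_self _ _
          rcases Finset.mem_insert.mp hmem with h | h
          · exact h
          · exact absurd (hq2 h) hq1'
        have h22 : q.2 = q'.2 := by
          have e1 : (insert q.1 q.2).erase q.1 = q.2 :=
            Finset.erase_insert (fun hc => hq1 (hq2 hc))
          have e2 : (insert q'.1 q'.2).erase q'.1 = q'.2 :=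
            Finset.erase_insert (fun hc => hq1' (hq2' hc))
          rw [← e1, ← e2, heq, h11]
        exact Prod.ext h11.symm h22
      have hsum2 : ∑ E ∈ T₂, θ E i = ∑ j ∈ J, θ {j} i := by
        rw [hT₂]
        exact Finset.sum_image (fun x _ y _ h => Finset.singleton_injective h)
      have hsum3 : ∑ E ∈ T₃, θ E i = ∑ j ∈ Jᶜ, ∑ E₀ ∈ J.powerset, θ (insert j E₀) i := by
        rw [hT₃, Finset.sum_image hinj3, Finset.sum_product]
      rw [← hsum2, ← hsum3, ← add_assoc, ← Finset.sum_union hd12, ← Finset.sum_union hd123]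
      refine (Finset.sum_subset (Finset.subset_univ _) ?_).symm
      intro E _ hE
      refine hJ E ?_ i
      by_contra hlt
      push_neg at hlt
      apply hE
      by_cases h0 : E \ J = ∅
      · have hEJ : E ⊆ J := Finset.sdiff_eq_empty_iff_subset.mp h0
        by_cases h1 : E.card = 1
        · obtain ⟨j, rfl⟩ := Finset.card_eq_one.mp h1
          refine Finset.mem_union_left _ (Finset.mem_union_right _ ?_)
          rw [hT₂]
          exact Finset.mem_image.mpr ⟨j, Finset.singleton_subset_iff.mp hEJ, rfl⟩
        · refine Finset.mem_union_left _ (Finset.mem_union_left _ ?_)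
          rw [hT₁]
          exact Finset.mem_filter.mpr ⟨Finset.mem_powerset.mpr hEJ, h1⟩
      · have hpos : (E \ J).card ≠ 0 := fun h => h0 (Finset.card_eq_zero.mp h)
        have hcard1 : (E \ J).card = 1 := by omega
        obtain ⟨j, hjeq⟩ := Finset.card_eq_one.mp hcard1
        have hjm : j ∈ E \ J := hjeq ▸ Finset.mem_singleton_self j
        have hjE : j ∈ E := (Finset.mem_sdiff.mp hjm).1
        have hjJ : j ∉ J := (Finset.mem_sdiff.mp hjm).2
        refine Finset.mem_union_right _ ?_
        rw [hT₃]
        refine Finset.mem_image.mpr ⟨(j, E ∩ J), ?_, ?_⟩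
        · exact Finset.mem_product.mpr ⟨Finset.mem_compl.mpr hjJ,
            Finset.mem_powerset.mpr Finset.inter_subset_right⟩
        · ext x
          simp only [Finset.mem_insert, Finset.mem_inter]
          constructor
          · rintro (rfl | ⟨hx, _⟩)
            exacts [hjE, hx]
          · intro hx
            by_cases hxJ : x ∈ J
            · exact Or.inr ⟨hx, hxJ⟩
            · left
              have hxm : x ∈ E \ J := Finset.mem_sdiff.mpr ⟨hx, hxJ⟩
              rw [hjeq] at hxm
              exact Finset.mem_singleton.mp hxm
    -- the decomposition
    refine ⟨fun h j c =>
      (if hj : j ∈ J then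
          (if φ j c = h ⟨j, hj⟩ then Real.exp (θ {j} (fun _ => c)) else 0)
        else Real.exp (∑ E₀ ∈ J.powerset, θ (insert j E₀) (Function.update (rep h) j c)))
      * (if j = (⟨0, hp⟩ : Fin p) then Real.exp (∑ E ∈ T₁, θ E (rep h)) / Z else 1),
      ?_, ?_⟩
    · intro h j c
      apply mul_nonneg
      · split_ifs <;> positivity
      · split_ifs
        · exact le_of_lt (div_pos (Real.exp_pos _) hZpos)
        · exact zero_le_one
    intro i
    beta_reduce
    set Φ : ↥J → Fin m := fun jj => φ jj.1 (i jj.1) with hΦdef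
    rw [Finset.sum_eq_single Φ (by
        intro h _ hneq
        obtain ⟨jj, hjj⟩ := Function.ne_iff.mp hneq
        refine Finset.prod_eq_zero (Finset.mem_univ jj.1) ?_
        rw [dif_pos jj.2, if_neg (fun hcon => hjj hcon.symm), zero_mul])
      (fun habs => absurd (Finset.mem_univ Φ) habs)]
    rw [Finset.prod_mul_distrib]
    have hext : ∏ j : Fin p, (if j = (⟨0, hp⟩ : Fin p)
        then Real.exp (∑ E ∈ T₁, θ E (rep Φ)) / Z else 1)
        = Real.exp (∑ E ∈ T₁, θ E (rep Φ)) / Z := by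
      simp [Finset.prod_ite_eq']
    rw [hext]
    rw [← Finset.prod_mul_prod_compl J]
    have hJprod : ∏ j ∈ J, (if hj : j ∈ J then
          (if φ j (i j) = Φ ⟨j, hj⟩ then Real.exp (θ {j} (fun _ => i j)) else 0)
        else Real.exp (∑ E₀ ∈ J.powerset, θ (insert j E₀) (Function.update (rep Φ) j (i j))))
        = Real.exp (∑ j ∈ J, θ {j} i) := by
      rw [Real.exp_sum]
      refine Finset.prod_congr rfl ?_
      intro j hj
      rw [dif_pos hj, if_pos rfl]
      congr 1
      exact hdep {j} _ _ (by intro x hx; rw [Finset.mem_singleton.mp hx])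
    have hJcprod : ∏ j ∈ Jᶜ, (if hj : j ∈ J then
          (if φ j (i j) = Φ ⟨j, hj⟩ then Real.exp (θ {j} (fun _ => i j)) else 0)
        else Real.exp (∑ E₀ ∈ J.powerset, θ (insert j E₀) (Function.update (rep Φ) j (i j))))
        = Real.exp (∑ j ∈ Jᶜ, ∑ E₀ ∈ J.powerset, θ (insert j E₀) i) := by
      rw [Real.exp_sum]
      refine Finset.prod_congr rfl ?_
      intro j hjc
      have hjJ : j ∉ J := Finset.mem_compl.mp hjc
      rw [dif_neg hjJ]
      congr 1
      refine Finset.sum_congr rfl ?_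
      intro E₀ hE₀
      rw [Finset.mem_powerset] at hE₀
      have hjE₀ : j ∉ E₀ := fun h => hjJ (hE₀ h)
      rcases Finset.eq_empty_or_nonempty E₀ with rfl | hE₀ne
      · refine hdep _ _ _ ?_
        intro x hx
        have hx' : x = j := by simpa using hx
        subst hx'
        rw [Function.update_self]
      · refine lemC _ _ _ ?_ ?_
        · rw [Finset.card_insert_of_notMem hjE₀]
          have := Finset.card_pos.mpr hE₀ne
          omega
        · intro x hx
          rcases Finset.mem_insert.mp hx with rfl | hxE₀
          · rw [Function.update_self]
          · have hxJ : x ∈ J := hE₀ hxE₀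
            have hxj : x ≠ j := fun h => hjJ (h ▸ hxJ)
            rw [Function.update_of_ne hxj]
            exact hrepφ i x hxJ
    rw [hJprod, hJcprod]
    have hT1eq : ∑ E ∈ T₁, θ E (rep Φ) = ∑ E ∈ T₁, θ E i := by
      refine Finset.sum_congr rfl ?_
      intro E hE
      rw [hT₁] at hE
      obtain ⟨hEp, hEc⟩ := Finset.mem_filter.mp hE
      rw [Finset.mem_powerset] at hEp
      rcases Nat.eq_zero_or_pos E.card with h0 | h1
      · have hE0 : E = ∅ := Finset.card_eq_zero.mp h0
        subst hE0
        exact hdep ∅ _ _ (fun x hx => absurd hx (Finset.notMem_empty x))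
      · refine lemC E _ _ (by omega) ?_
        intro x hx
        exact hrepφ i x (hEp hx)
    rw [hT1eq]
    show Real.exp (∑ E : Finset (Fin p), θ E i) / Z = _
    rw [hsplit i, Real.exp_add, Real.exp_add]
    ring
  obtain ⟨lam, hpos, hsum⟩ := main
  have hcard : Fintype.card (↥J → Fin m) = m ^ J.card := by
    rw [Fintype.card_fun, Fintype.card_coe, Fintype.card_fin]
  let e := Fintype.equivFinOfCardEq hcard
  refine Nat.sInf_le ⟨fun t => lam (e.symm t), fun t j c => hpos _ j c, fun i => ?_⟩
  rw [hsum i]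
  exact (Equiv.sum_comp e.symm (fun h => ∏ j : Fin p, lam h j (i j))).symm
end

section
/- Suppose π is a d^p probability tensor generated by a weakly hierarchical log-linear model θ with |C_θ^{(j)}| < m − 1 for all j ∈ V, where m ≥ 2. Let J ⊊ V be such that every variable outside J is marginally independent of all other variables, expressed in the log-linear parameterization as: θ_E ≡ 0 for every E ⊆ V with |E| ≥ 2 and E ∩ (V∖J) ≠ ∅. Then rnk⁺_P(π) ≤ m^{|J|}. -/

lemma exists_classMap {d m : ℕ} (C : Set (Fin d)) (hCm : C.ncard + 1 ≤ m) :
    ∃ q : Fin d → Fin m, ∀ a b, q a = q b → a ∈ C → b = a := by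
  classical
  have hfin : C.Finite := Set.toFinite _
  have hcard : hfin.toFinset.card + 1 ≤ m := by
    rwa [← Set.ncard_eq_toFinset_card C hfin]
  set t := hfin.toFinset with ht
  let e := t.orderIsoOfFin rfl
  refine ⟨fun a => if h : a ∈ t then
      ⟨(e.symm ⟨a, h⟩ : Fin t.card).val + 1, by
        have := (e.symm ⟨a, h⟩).isLt; omega⟩
    else ⟨0, by omega⟩, ?_⟩
  intro a b hab haC
  simp only at hab
  have ha : a ∈ t := hfin.mem_toFinset.mpr haC
  rw [dif_pos ha] at hab
  by_cases hb : b ∈ t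
  · rw [dif_pos hb] at hab
    have hv := congrArg Fin.val hab
    simp only [] at hv
    have h1 : (e.symm ⟨a, ha⟩ : Fin t.card) = e.symm ⟨b, hb⟩ := Fin.ext (by omega)
    have h2 : (⟨a, ha⟩ : {x // x ∈ t}) = ⟨b, hb⟩ := e.symm.injective h1
    exact (Subtype.ext_iff.mp h2).symm
  · rw [dif_neg hb] at hab
    have hv := congrArg Fin.val hab
    simp only [] at hv
    omega

lemma sum_small {p : ℕ} (f : Finset (Fin p) → ℝ) :
    ∑ E ∈ Finset.univ.filter (fun E : Finset (Fin p) => ¬ 2 ≤ E.card), f E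
      = f ∅ + ∑ j : Fin p, f {j} := by
  classical
  have hset : Finset.univ.filter (fun E : Finset (Fin p) => ¬ 2 ≤ E.card)
      = insert ∅ (Finset.univ.image fun j : Fin p => {j}) := by
    ext E
    simp only [Finset.mem_filter, Finset.mem_univ, true_and, Finset.mem_insert,
      Finset.mem_image]
    constructor
    · intro h
      have h1 : E.card = 0 ∨ E.card = 1 := by omega
      rcases h1 with h1 | h1
      · exact Or.inl (Finset.card_eq_zero.mp h1)
      · obtain ⟨a, ha⟩ := Finset.card_eq_one.mp h1
        exact Or.inr ⟨a, ha.symm⟩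
    · rintro (rfl | ⟨a, -, rfl⟩) <;> simp
  rw [hset, Finset.sum_insert (by simp only [Finset.mem_image]; rintro ⟨a, -, h⟩; exact Finset.singleton_ne_empty a h),
    Finset.sum_image (fun a _ b _ h => Finset.singleton_injective h)]

/-- Corollary 3: suppose `π` is the `d^p` probability tensor of a weakly hierarchical
log-linear model `θ` with `|C_θ^{(j)}| < m − 1` for all `j`, where `m ≥ 2`, and suppose
`J ⊊ V` is such that every variable outside `J` is marginally independent of all other
variables, expressed in the log-linear parameterization as: `θ_E ≡ 0` for every `E` with
`|E| ≥ 2` and `E ∩ (V∖J) ≠ ∅`.  Then the nonnegative PARAFAC rank of `π` is at most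
`m^{|J|}`. -/
theorem parafacRank_le_pow_card_margIndep {p d m : ℕ} (hm : 2 ≤ m)
    (θ : Finset (Fin p) → (Fin p → Fin d) → ℝ)
    (hdep : ∀ (E : Finset (Fin p)) (i i' : Fin p → Fin d),
      (∀ j ∈ E, i j = i' j) → θ E i = θ E i')
    (hwh : ∀ (E F : Finset (Fin p)) (i i' : Fin p → Fin d),
      E ⊆ F → θ E i = 0 → (∀ j ∈ E, i' j = i j) → θ F i' = 0)
    (hC : ∀ j : Fin p, (interactingLevels θ j).ncard < m - 1)
    (J : Finset (Fin p)) (hJV : J ⊂ Finset.univ)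
    (hJ : ∀ E : Finset (Fin p), 2 ≤ E.card → (E \ J).Nonempty →
      ∀ i : Fin p → Fin d, θ E i = 0) :
    parafacRank (d := fun _ => d) (loglinTensor (d := fun _ => d) θ) ≤ m ^ J.card := by
  classical
  obtain ⟨j₀, -, hj₀⟩ := Finset.exists_of_ssubset hJV
  rcases Nat.eq_zero_or_pos d with hd | hd
  · subst hd
    exact Nat.sInf_le ⟨fun _ _ _ => 0, fun _ _ _ => le_refl 0, fun i => (i j₀).elim0⟩
  haveI hne : Nonempty (Fin p → Fin d) := ⟨fun _ => ⟨0, hd⟩⟩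
  -- notation
  set S : (Fin p → Fin d) → ℝ := fun i => ∑ E : Finset (Fin p), θ E i with hS
  set Z : ℝ := ∑ i' : Fin p → Fin d, Real.exp (S i') with hZ
  have hZpos : 0 < Z := Finset.sum_pos (fun i _ => Real.exp_pos _) Finset.univ_nonempty
  set R : (Fin p → Fin d) → ℝ :=
    fun i => ∑ E ∈ Finset.univ.filter (fun E : Finset (Fin p) => 2 ≤ E.card), θ E i with hR
  -- class maps
  have hq' : ∀ j : Fin p, ∃ q : Fin d → Fin m,
      ∀ a b, q a = q b → a ∈ interactingLevels θ j → b = a := by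
    intro j
    apply exists_classMap
    have := hC j
    omega
  choose q hq using hq'
  -- key invariance claim
  have keyR : ∀ i i' : Fin p → Fin d,
      (∀ j, j ∈ J → q j (i j) = q j (i' j)) → R i = R i' := by
    intro i i' hpat
    apply Finset.sum_congr rfl
    intro E hE
    have h2 : 2 ≤ E.card := (Finset.mem_filter.mp hE).2
    by_cases hEJ : (E \ J).Nonempty
    · rw [hJ E h2 hEJ i, hJ E h2 hEJ i']
    · have hsub : E ⊆ J := by
        rwa [Finset.not_nonempty_iff_eq_empty, Finset.sdiff_eq_empty_iff_subset] at hEJ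
      by_cases hall : ∀ j ∈ E, i j ∈ interactingLevels θ j
      · exact hdep E i i' fun j hj => (hq j _ _ (hpat j (hsub hj)) (hall j hj)).symm
      · push_neg at hall
        obtain ⟨ja, hja, hnot⟩ := hall
        obtain ⟨jb, hjb, hjab⟩ := Finset.exists_mem_ne (s := E) (by omega) ja
        have hz : ∀ x : Fin p → Fin d, x ja = i ja → θ {ja, jb} x = 0 := by
          intro x hx
          by_contra hne'
          exact hnot ⟨jb, hjab, x, hx, hne'⟩
        have hieq : i ja = i' ja → False → True := fun _ _ => trivial
        have hnot' : i' ja ∉ interactingLevels θ ja := by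
          intro hmem
          have heq : i ja = i' ja := hq ja (i' ja) (i ja) (hpat ja (hsub hja)).symm hmem
          rw [← heq] at hmem
          exact hnot hmem
        have hz' : ∀ x : Fin p → Fin d, x ja = i' ja → θ {ja, jb} x = 0 := by
          intro x hx
          by_contra hne'
          exact hnot' ⟨jb, hjab, x, hx, hne'⟩
        have hsub2 : ({ja, jb} : Finset (Fin p)) ⊆ E := by
          intro x hx
          simp only [Finset.mem_insert, Finset.mem_singleton] at hx
          rcases hx with rfl | rfl
          exacts [hja, hjb]
        rw [hwh {ja, jb} E i i hsub2 (hz i rfl) (fun _ _ => rfl),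
            hwh {ja, jb} E i' i' hsub2 (hz' i' rfl) (fun _ _ => rfl)]
  -- decomposition pieces
  set b : Fin p → Fin d → ℝ := fun j c => Real.exp (θ {j} (fun _ => c)) with hb
  set c₀ : ℝ := Real.exp (θ ∅ (fun _ => ⟨0, hd⟩)) with hc0
  set w : ({x // x ∈ J} → Fin m) → ℝ := fun h =>
    if hh : ∃ i : Fin p → Fin d, ∀ j : {x // x ∈ J}, q j (i j) = h j
    then Real.exp (R hh.choose) else 0 with hw
  have hwnn : ∀ h, 0 ≤ w h := by
    intro h
    rw [hw]
    dsimp only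
    split
    · exact (Real.exp_pos _).le
    · exact le_rfl
  set Λ : ({x // x ∈ J} → Fin m) → (j : Fin p) → Fin d → ℝ := fun h j c =>
    if hj : j ∈ J then (if q j c = h ⟨j, hj⟩ then b j c else 0)
    else if j = j₀ then c₀ * w h / Z * b j c else b j c with hΛ
  have hΛnn : ∀ h j c, 0 ≤ Λ h j c := by
    intro h j c
    rw [hΛ]
    dsimp only
    split
    · split
      · exact (Real.exp_pos _).le
      · exact le_rfl
    · split
      · exact mul_nonneg (div_nonneg (mul_nonneg (Real.exp_pos _).le (hwnn h)) hZpos.le)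
          (Real.exp_pos _).le
      · exact (Real.exp_pos _).le
  -- main identity
  have hmain : ∀ i : Fin p → Fin d,
      loglinTensor (d := fun _ => d) θ i = ∑ h : {x // x ∈ J} → Fin m, ∏ j, Λ h j (i j) := by
    intro i
    set hᵢ : {x // x ∈ J} → Fin m := fun j => q j (i j) with hhᵢ
    have hsum : ∑ h : {x // x ∈ J} → Fin m, ∏ j, Λ h j (i j) = ∏ j, Λ hᵢ j (i j) := by
      apply Fintype.sum_eq_single
      intro h hne'
      have hex : ∃ j : {x // x ∈ J}, h j ≠ q j (i j) := by
        by_contra hcon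
        push_neg at hcon
        exact hne' (funext hcon)
      obtain ⟨j, hj⟩ := hex
      apply Finset.prod_eq_zero (Finset.mem_univ (j : Fin p))
      rw [hΛ]
      dsimp only
      rw [dif_pos j.2, if_neg]
      intro hqe
      exact hj hqe.symm
    have hprod : ∀ j : Fin p, Λ hᵢ j (i j)
        = (if j = j₀ then c₀ * w hᵢ / Z else 1) * b j (i j) := by
      intro j
      by_cases hj : j ∈ J
      · have hjne : j ≠ j₀ := fun hh => hj₀ (hh ▸ hj)
        rw [hΛ]
        dsimp only
        rw [dif_pos hj, if_pos (by rw [hhᵢ]), if_neg hjne, one_mul]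
      · by_cases hj2 : j = j₀
        · rw [hΛ]; dsimp only; rw [dif_neg hj, if_pos hj2, if_pos hj2]
        · rw [hΛ]; dsimp only; rw [dif_neg hj, if_neg hj2, if_neg hj2, one_mul]
    have hwval : w hᵢ = Real.exp (R i) := by
      have hex : ∃ i'' : Fin p → Fin d, ∀ j : {x // x ∈ J}, q j (i'' j) = hᵢ j :=
        ⟨i, fun j => rfl⟩
      rw [hw]
      dsimp only
      rw [dif_pos hex]
      congr 1
      apply keyR
      intro j hjJ
      exact hex.choose_spec ⟨j, hjJ⟩
    have h2 : ∀ j : Fin p, Real.exp (θ {j} i) = b j (i j) := by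
      intro j
      rw [hb]
      dsimp only
      congr 1
      exact hdep {j} i (fun _ => i j) (by
        intro j' hj'
        rw [Finset.mem_singleton] at hj'
        subst hj'
        rfl)
    have h3 : Real.exp (θ ∅ i) = c₀ := by
      rw [hc0]
      congr 1
      exact hdep ∅ i _ (fun j hj => absurd hj (Finset.notMem_empty j))
    have h1 : S i = (θ ∅ i + ∑ j : Fin p, θ {j} i) + R i := by
      rw [hS, hR]
      dsimp only
      rw [← Finset.sum_filter_add_sum_filter_not Finset.univ
        (fun E : Finset (Fin p) => 2 ≤ E.card) (fun E => θ E i), sum_small (fun E => θ E i)]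
      ring
    have hLHS : loglinTensor (d := fun _ => d) θ i = Real.exp (S i) / Z := rfl
    rw [hLHS, hsum, h1, Real.exp_add, Real.exp_add, Real.exp_sum, h3]
    have hbp : ∑ j : Fin p, Real.exp (θ {j} i) = 0 ∨ True := Or.inr trivial
    have hprodall : ∏ j, Λ hᵢ j (i j) = (c₀ * w hᵢ / Z) * ∏ j, b j (i j) := by
      calc ∏ j, Λ hᵢ j (i j)
          = ∏ j, ((if j = j₀ then c₀ * w hᵢ / Z else 1) * b j (i j)) :=
            Finset.prod_congr rfl (fun j _ => hprod j)
        _ = (∏ j, (if j = j₀ then c₀ * w hᵢ / Z else 1)) * ∏ j, b j (i j) :=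
            Finset.prod_mul_distrib
        _ = (c₀ * w hᵢ / Z) * ∏ j, b j (i j) := by
            congr 1
            simp
    rw [hprodall, hwval]
    rw [Finset.prod_congr rfl (fun j _ => h2 j)]
    ring
  -- conclude
  have hcardH : Fintype.card ({x // x ∈ J} → Fin m) = m ^ J.card := by
    simp [Fintype.card_fun]
  let e := Fintype.equivFinOfCardEq hcardH
  apply Nat.sInf_le
  refine ⟨fun k => Λ (e.symm k), fun k j c => hΛnn _ j c, fun i => ?_⟩
  rw [hmain i]
  exact (Equiv.sum_comp e.symm (fun h => ∏ j, Λ h j (i j))).symm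
end

section
/- Let M be a d × d nonnegative matrix, let λ^{(1)}, λ^{(2)} ∈ ℝ^d be nonnegative vectors, and set M̃ = λ^{(1)} ⊗ λ^{(2)} (so M̃_{c_1 c_2} = λ^{(1)}_{c_1} λ^{(2)}_{c_2}). Let C_M = { (c_1, c_2) : M_{c_1 c_2} ≠ M̃_{c_1 c_2} }. Suppose H_1, H_2 ⊆ {1,…,d} are such that every (c_1, c_2) ∈ C_M has c_1 ∈ H_1 or c_2 ∈ H_2. Then the nonnegative rank of M satisfies rnk⁺_P(M) ≤ 1 + |H_1| + |H_2|. -/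
/-- The nonnegative rank of a `d × d` matrix `M`: the smallest `m` such that there are
nonnegative vectors `u h, v h : Fin d → ℝ` with `M c₁ c₂ = ∑ h, u h c₁ * v h c₂`. -/
noncomputable def nnRank {d : ℕ} (M : Fin d → Fin d → ℝ) : ℕ :=
  sInf {m | ∃ u v : Fin m → Fin d → ℝ,
    (∀ h c, 0 ≤ u h c) ∧ (∀ h c, 0 ≤ v h c) ∧
    ∀ c₁ c₂, M c₁ c₂ = ∑ h : Fin m, u h c₁ * v h c₂}

/-- Proposition 1: let `M` be a `d × d` nonnegative matrix, `λ⁽¹⁾, λ⁽²⁾` nonnegative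
vectors, and `M̃ = λ⁽¹⁾ ⊗ λ⁽²⁾`.  If `H₁, H₂ ⊆ {1,…,d}` are such that every cell where
`M` differs from `M̃` lies in a row indexed by `H₁` or a column indexed by `H₂`, then the
nonnegative rank of `M` is at most `1 + |H₁| + |H₂|`. -/
theorem nnRank_le_one_add_cover {d : ℕ} (M : Fin d → Fin d → ℝ)
    (hM : ∀ c₁ c₂, 0 ≤ M c₁ c₂)
    (lam₁ lam₂ : Fin d → ℝ) (h₁ : ∀ c, 0 ≤ lam₁ c) (h₂ : ∀ c, 0 ≤ lam₂ c)
    (H₁ H₂ : Finset (Fin d))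
    (hcov : ∀ c₁ c₂, M c₁ c₂ ≠ lam₁ c₁ * lam₂ c₂ → c₁ ∈ H₁ ∨ c₂ ∈ H₂) :
    nnRank M ≤ 1 + H₁.card + H₂.card := by
  set m := 1 + H₁.card + H₂.card with hm
  have hcard : Fintype.card (Unit ⊕ ↥H₁ ⊕ ↥H₂) = m := by
    simp only [Fintype.card_sum, Fintype.card_unit, Fintype.card_coe, hm]
    omega
  have e : Fin m ≃ (Unit ⊕ ↥H₁ ⊕ ↥H₂) :=
    Fintype.equivOfCardEq (by simp [hcard])
  set U : (Unit ⊕ ↥H₁ ⊕ ↥H₂) → Fin d → ℝ :=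
    Sum.elim (fun _ c => if c ∈ H₁ then 0 else lam₁ c)
      (Sum.elim (fun r c => if c = (r : Fin d) then 1 else 0)
        (fun s c => if c ∈ H₁ then 0 else M c s)) with hU
  set V : (Unit ⊕ ↥H₁ ⊕ ↥H₂) → Fin d → ℝ :=
    Sum.elim (fun _ c => if c ∈ H₂ then 0 else lam₂ c)
      (Sum.elim (fun r c => M r c)
        (fun s c => if c = (s : Fin d) then 1 else 0)) with hV
  have hU0 : ∀ t c, 0 ≤ U t c := by
    rintro (_ | r | s) c <;> simp only [hU, Sum.elim_inl, Sum.elim_inr] <;> split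
    · rfl
    · exact h₁ c
    · exact zero_le_one
    · rfl
    · rfl
    · exact hM c _
  have hV0 : ∀ t c, 0 ≤ V t c := by
    rintro (_ | r | s) c <;> simp only [hV, Sum.elim_inl, Sum.elim_inr]
    · split
      · rfl
      · exact h₂ c
    · exact hM _ c
    · split
      · exact zero_le_one
      · rfl
  apply Nat.sInf_le
  refine ⟨fun h => U (e h), fun h => V (e h), fun h c => hU0 _ c, fun h c => hV0 _ c, ?_⟩
  intro c₁ c₂
  have hsum : ∑ h : Fin m, U (e h) c₁ * V (e h) c₂ =
      ∑ t : Unit ⊕ ↥H₁ ⊕ ↥H₂, U t c₁ * V t c₂ :=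
    Fintype.sum_equiv e _ _ (fun h => rfl)
  rw [hsum, Fintype.sum_sum_type, Fintype.sum_sum_type]
  have hrow : ∑ r : ↥H₁, U (Sum.inr (Sum.inl r)) c₁ * V (Sum.inr (Sum.inl r)) c₂ =
      if c₁ ∈ H₁ then M c₁ c₂ else 0 := by
    simp only [hU, hV, Sum.elim_inr, Sum.elim_inl]
    rw [Finset.sum_coe_sort H₁ (fun r => (if c₁ = r then (1:ℝ) else 0) * M r c₂)]
    simp [Finset.sum_ite_eq]
  have hcol : ∑ s : ↥H₂, U (Sum.inr (Sum.inr s)) c₁ * V (Sum.inr (Sum.inr s)) c₂ =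
      if c₂ ∈ H₂ then (if c₁ ∈ H₁ then 0 else M c₁ c₂) else 0 := by
    simp only [hU, hV, Sum.elim_inr]
    rw [Finset.sum_coe_sort H₂
      (fun s => (if c₁ ∈ H₁ then (0:ℝ) else M c₁ s) * (if c₂ = s then 1 else 0))]
    simp [Finset.sum_ite_eq]
  rw [hrow, hcol]
  simp only [Finset.univ_unique, Finset.sum_singleton]
  by_cases hc1 : c₁ ∈ H₁ <;> by_cases hc2 : c₂ ∈ H₂ <;>
    simp [hU, hV, hc1, hc2]
  by_contra hne
  rcases hcov c₁ c₂ hne with h | h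
  · exact hc1 h
  · exact hc2 h
end

section
/- Suppose π is a probability tensor corresponding to a weakly hierarchical log-linear model θ, let H = (H_1,…,H_p) ∈ ℋ, let J ⊆ V, and for each k ∈ V∖J fix a level c_k ∈ H_k. Define the cell set A = { i ∈ ∏_{j∈V} I_j : i_k = c_k for all k ∈ V∖J and i_j ∉ H_j for all j ∈ J } and P(A) = ∑_{i∈A} π(i), and assume P(A) > 0. Then for every cell i ∈ ∏_{j∈V} I_j, 1_A(i) · π(i) · P(A)^{p−1} = ∏_{j=1}^p ( ∑_{i'∈A : i'_j = i_j} π(i') ); that is, the variables y_1,…,y_p are conditionally independent given the event A. -/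
/-- Key step in the proof of Theorem 2: if `π` is the probability tensor of a weakly
hierarchical log-linear model `θ`, `H ∈ ℋ` covers all nonzero interactions of order at
least two, `J ⊆ V`, and `c` fixes levels `c_k ∈ H_k` for the variables `k ∉ J`, then on
the event `A = {i : i_k = c_k ∀ k ∉ J, i_j ∉ H_j ∀ j ∈ J}` (assumed to have positive
probability) the variables `y_1,…,y_p` are conditionally independent:
`1_A(i) · π(i) · P(A)^{p−1} = ∏_j (∑_{i' ∈ A : i'_j = i_j} π(i'))` for every cell `i`. -/
theorem condIndep_given_cover_event {p : ℕ} {d : Fin p → ℕ}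
    (θ : Finset (Fin p) → ((j : Fin p) → Fin (d j)) → ℝ)
    (hdep : ∀ (E : Finset (Fin p)) (i i' : (j : Fin p) → Fin (d j)),
      (∀ j ∈ E, i j = i' j) → θ E i = θ E i')
    (hwh : ∀ (E F : Finset (Fin p)) (i i' : (j : Fin p) → Fin (d j)),
      E ⊆ F → θ E i = 0 → (∀ j ∈ E, i' j = i j) → θ F i' = 0)
    (H : (j : Fin p) → Finset (Fin (d j)))
    (hH : ∀ (E : Finset (Fin p)) (i : (j : Fin p) → Fin (d j)),
      2 ≤ E.card → θ E i ≠ 0 → ∃ j ∈ E, i j ∈ H j)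
    (J : Finset (Fin p)) (c : (j : Fin p) → Fin (d j))
    (hc : ∀ k ∉ J, c k ∈ H k) :
    let π := loglinTensor θ
    let A : Finset ((j : Fin p) → Fin (d j)) :=
      Finset.univ.filter (fun i => (∀ k ∉ J, i k = c k) ∧ ∀ j ∈ J, i j ∉ H j)
    let PA : ℝ := ∑ i ∈ A, π i
    0 < PA →
      ∀ i : (j : Fin p) → Fin (d j),
        (if i ∈ A then (1 : ℝ) else 0) * π i * PA ^ (p - 1) =
          ∏ j : Fin p, ∑ i' ∈ A.filter (fun i' => i' j = i j), π i' := by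
  classical
  intro π A PA hPA i0
  -- case p = 0
  rcases Nat.eq_zero_or_pos p with rfl | hp
  · have huniv : (Finset.univ : Finset ((j : Fin 0) → Fin (d j))) = {i0} := by
      refine Finset.eq_singleton_iff_unique_mem.mpr
        ⟨Finset.mem_univ _, fun x _ => Subsingleton.elim x i0⟩
    have hiA : i0 ∈ A := by
      simp only [A, Finset.mem_filter]
      exact ⟨Finset.mem_univ _, fun k _ => k.elim0, fun j _ => j.elim0⟩
    have hπ1 : π i0 = 1 := by
      simp only [π, loglinTensor]
      rw [huniv, Finset.sum_singleton, div_self (Real.exp_ne_zero _)]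
    simp [hiA, hπ1]
  have hp1 : p - 1 + 1 = p := Nat.succ_pred_eq_of_pos hp
  -- abbreviations
  have hAmem : ∀ i, i ∈ A ↔ ((∀ k ∉ J, i k = c k) ∧ ∀ j ∈ J, i j ∉ H j) := by
    intro i
    simp only [A, Finset.mem_filter, Finset.mem_univ, true_and]
  have hAne : A.Nonempty := by
    rw [Finset.nonempty_iff_ne_empty]
    intro h
    simp only [PA, h, Finset.sum_empty] at hPA
    exact lt_irrefl 0 hPA
  have hne : Nonempty ((j : Fin p) → Fin (d j)) := ⟨hAne.choose⟩
  set Z : ℝ := ∑ i' : (j : Fin p) → Fin (d j), Real.exp (∑ E : Finset (Fin p), θ E i')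
    with hZdef
  have hZpos : 0 < Z :=
    Finset.sum_pos (fun _ _ => Real.exp_pos _) Finset.univ_nonempty
  set g0 : ℝ := ∑ E ∈ Finset.univ.filter (fun E : Finset (Fin p) => E ∩ J = ∅), θ E c
    with hg0def
  set F : (j : Fin p) → Fin (d j) → ℝ := fun j x =>
    if j ∈ J then
      Real.exp (∑ E ∈ Finset.univ.filter
        (fun E : Finset (Fin p) => E ∩ J = {j}), θ E (Function.update c j x))
    else 1 with hFdef
  set Cc : ℝ := Real.exp g0 / Z with hCcdef
  have hCcpos : 0 < Cc := div_pos (Real.exp_pos _) hZpos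
  set B : (j : Fin p) → Finset (Fin (d j)) := fun j =>
    if j ∈ J then (H j)ᶜ else {c j} with hBdef
  set S : (j : Fin p) → ℝ := fun j => ∑ x ∈ B j, F j x with hSdef
  have hFpos : ∀ j x, 0 < F j x := by
    intro j x
    simp only [hFdef]
    split
    · exact Real.exp_pos _
    · exact one_pos
  -- A is a product set
  have hA' : A = Fintype.piFinset B := by
    ext i
    rw [hAmem, Fintype.mem_piFinset]
    constructor
    · rintro ⟨h1, h2⟩ j
      simp only [hBdef]
      by_cases hj : j ∈ J
      · simp [hj, h2 j hj]
      · simp [hj, h1 j hj]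
    · intro h
      constructor
      · intro k hk
        have := h k
        simp only [hBdef, if_neg hk, Finset.mem_singleton] at this
        exact this
      · intro j hj
        have := h j
        simp only [hBdef, if_pos hj, Finset.mem_compl] at this
        exact this
  -- the key vanishing lemma
  have hzero : ∀ i : (j : Fin p) → Fin (d j), (∀ j ∈ J, i j ∉ H j) →
      ∀ E : Finset (Fin p), 2 ≤ (E ∩ J).card → θ E i = 0 := by
    intro i hi2 E hE
    obtain ⟨j1, hj1, j2, hj2, hne12⟩ := Finset.one_lt_card.mp hE
    by_contra hθ
    have hsub : ({j1, j2} : Finset (Fin p)) ⊆ E := by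
      intro x hx
      rcases Finset.mem_insert.mp hx with rfl | hx
      · exact (Finset.mem_inter.mp hj1).1
      · rw [Finset.mem_singleton.mp hx]
        exact (Finset.mem_inter.mp hj2).1
    have h2 : θ {j1, j2} i ≠ 0 := fun h0 => hθ (hwh _ E i i hsub h0 (fun _ _ => rfl))
    have hcard : 2 ≤ ({j1, j2} : Finset (Fin p)).card := by
      rw [Finset.card_insert_of_notMem (by simp [hne12]), Finset.card_singleton]
    obtain ⟨j, hjmem, hjH⟩ := hH _ i hcard h2
    have hjJ : j ∈ J := by
      rcases Finset.mem_insert.mp hjmem with rfl | hx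
      · exact (Finset.mem_inter.mp hj1).2
      · rw [Finset.mem_singleton.mp hx]
        exact (Finset.mem_inter.mp hj2).2
    exact hi2 j hjJ hjH
  -- decomposition of each θ E i for i ∈ A
  have key : ∀ i : (j : Fin p) → Fin (d j),
      (∀ k ∉ J, i k = c k) → (∀ j ∈ J, i j ∉ H j) →
      ∀ E : Finset (Fin p),
      θ E i = (if E ∩ J = ∅ then θ E c else 0) +
        ∑ j ∈ J, (if E ∩ J = {j} then θ E (Function.update c j (i j)) else 0) := by
    intro i hi1 hi2 E
    by_cases h0 : E ∩ J = ∅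
    · rw [if_pos h0]
      have hsum0 : ∑ j ∈ J, (if E ∩ J = {j} then θ E (Function.update c j (i j)) else 0)
          = 0 := by
        apply Finset.sum_eq_zero
        intro j _
        rw [if_neg]
        intro h
        exact Finset.singleton_ne_empty j (h.symm.trans h0)
      rw [hsum0, add_zero]
      apply hdep
      intro k hk
      apply hi1
      intro hkJ
      exact Finset.notMem_empty k (h0 ▸ Finset.mem_inter.mpr ⟨hk, hkJ⟩)
    · by_cases h1 : ∃ j0, E ∩ J = {j0}
      · obtain ⟨j0, hEJ⟩ := h1
        have hj0 : j0 ∈ E ∩ J := hEJ ▸ Finset.mem_singleton_self j0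
        have hj0J : j0 ∈ J := (Finset.mem_inter.mp hj0).2
        rw [if_neg h0, zero_add]
        rw [Finset.sum_eq_single_of_mem j0 hj0J]
        · rw [if_pos hEJ]
          apply hdep
          intro k hk
          by_cases hkj : k = j0
          · subst hkj; rw [Function.update_self]
          · rw [Function.update_of_ne hkj]
            apply hi1
            intro hkJ
            exact hkj (Finset.mem_singleton.mp (hEJ ▸ Finset.mem_inter.mpr ⟨hk, hkJ⟩))
        · intro j _ hjne
          rw [if_neg]
          intro h
          rw [hEJ] at h
          exact hjne (Finset.singleton_injective h).symm
      · have hcard : 2 ≤ (E ∩ J).card := by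
          by_contra hlt
          push_neg at hlt
          have h01 : (E ∩ J).card = 0 ∨ (E ∩ J).card = 1 := by omega
          rcases h01 with h | h
          · exact h0 (Finset.card_eq_zero.mp h)
          · exact h1 (Finset.card_eq_one.mp h)
        rw [hzero i hi2 E hcard, if_neg h0, zero_add]
        symm
        apply Finset.sum_eq_zero
        intro j _
        rw [if_neg]
        intro h
        rw [h, Finset.card_singleton] at hcard
        omega
  -- factorization of π on A
  have hπfact : ∀ i ∈ A, π i = Cc * ∏ j : Fin p, F j (i j) := by
    intro i hiA
    rw [hAmem] at hiA
    obtain ⟨hi1, hi2⟩ := hiA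
    have hsum : ∑ E : Finset (Fin p), θ E i =
        g0 + ∑ j ∈ J, ∑ E ∈ Finset.univ.filter
          (fun E : Finset (Fin p) => E ∩ J = {j}), θ E (Function.update c j (i j)) := by
      rw [Finset.sum_congr rfl (fun E _ => key i hi1 hi2 E)]
      rw [Finset.sum_add_distrib, Finset.sum_comm]
      congr 1
      · rw [hg0def, Finset.sum_filter]
      · apply Finset.sum_congr rfl
        intro j _
        rw [Finset.sum_filter]
    have hprodF : ∏ j : Fin p, F j (i j) =
        Real.exp (∑ j ∈ J, ∑ E ∈ Finset.univ.filter
          (fun E : Finset (Fin p) => E ∩ J = {j}), θ E (Function.update c j (i j))) := by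
      rw [Real.exp_sum]
      rw [← Finset.prod_subset (Finset.subset_univ J)
        (fun j _ hj => by simp only [hFdef, if_neg hj])]
      apply Finset.prod_congr rfl
      intro j hj
      simp only [hFdef, if_pos hj]
    simp only [π, loglinTensor, ← hZdef, hsum, Real.exp_add, hprodF, hCcdef]
    ring
  -- P(A) as a product
  have hPAeq : PA = Cc * ∏ j : Fin p, S j := by
    simp only [PA]
    rw [Finset.sum_congr rfl hπfact, ← Finset.mul_sum]
    rw [Finset.sum_congr hA' (fun _ _ => rfl), ← Finset.prod_univ_sum]
  -- the marginal sums
  have hfiltereq : ∀ j, A.filter (fun i' => i' j = i0 j)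
      = Fintype.piFinset (Function.update B j ({i0 j} ∩ B j)) := by
    intro j
    ext i
    rw [Finset.mem_filter, hA', Fintype.mem_piFinset, Fintype.mem_piFinset]
    constructor
    · rintro ⟨hB, hji⟩ k
      by_cases hk : k = j
      · subst hk
        rw [Function.update_self]
        exact Finset.mem_inter.mpr ⟨Finset.mem_singleton.mpr hji, hB k⟩
      · rw [Function.update_of_ne hk]
        exact hB k
    · intro h
      have hj := h j
      rw [Function.update_self, Finset.mem_inter, Finset.mem_singleton] at hj
      refine ⟨fun k => ?_, hj.1⟩
      by_cases hk : k = j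
      · subst hk; exact hj.2
      · have := h k
        rwa [Function.update_of_ne hk] at this
  have hTj : ∀ j, ∑ i' ∈ A.filter (fun i' => i' j = i0 j), π i' =
      Cc * ((if i0 j ∈ B j then F j (i0 j) else 0) * ∏ k ∈ Finset.univ.erase j, S k) := by
    intro j
    rw [Finset.sum_congr rfl (fun i hi => hπfact i (Finset.mem_filter.mp hi).1),
      ← Finset.mul_sum]
    rw [Finset.sum_congr (hfiltereq j) (fun _ _ => rfl), ← Finset.prod_univ_sum]
    congr 1
    have hswitch : ∏ k : Fin p, ∑ x ∈ Function.update B j ({i0 j} ∩ B j) k, F k x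
        = ∏ k : Fin p, Function.update S j (∑ x ∈ ({i0 j} ∩ B j), F j x) k := by
      apply Finset.prod_congr rfl
      intro k _
      by_cases hk : k = j
      · subst hk; rw [Function.update_self, Function.update_self]
      · rw [Function.update_of_ne hk, Function.update_of_ne hk, hSdef]
    rw [hswitch, Finset.prod_update_of_mem (Finset.mem_univ j), ← Finset.erase_eq]
    congr 1
    by_cases hm : i0 j ∈ B j
    · rw [Finset.singleton_inter_of_mem hm, Finset.sum_singleton, if_pos hm]
    · rw [Finset.singleton_inter_of_notMem hm, Finset.sum_empty, if_neg hm]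
  -- main case split
  by_cases hiA : i0 ∈ A
  · have hBj : ∀ j, i0 j ∈ B j := by
      have := hiA
      rw [hA', Fintype.mem_piFinset] at this
      exact this
    have hSpos : ∀ j, 0 < S j := by
      intro j
      rw [hSdef]
      exact Finset.sum_pos (fun x _ => hFpos j x) ⟨i0 j, hBj j⟩
    have hPSne : (∏ k : Fin p, S k) ≠ 0 :=
      ne_of_gt (Finset.prod_pos (fun k _ => hSpos k))
    have herase : ∀ j, ∏ k ∈ Finset.univ.erase j, S k = (∏ k : Fin p, S k) / S j := by
      intro j
      rw [eq_div_iff (ne_of_gt (hSpos j)), mul_comm]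
      exact Finset.mul_prod_erase _ S (Finset.mem_univ j)
    have hprodprod : ∏ j : Fin p, ∏ k ∈ Finset.univ.erase j, S k
        = (∏ k : Fin p, S k) ^ (p - 1) := by
      have h1 : ∏ j : Fin p, ∏ k ∈ Finset.univ.erase j, S k
          = ∏ j : Fin p, ((∏ k : Fin p, S k) / S j) :=
        Finset.prod_congr rfl (fun j _ => herase j)
      rw [h1, Finset.prod_div_distrib, Finset.prod_const, Finset.card_univ,
        Fintype.card_fin, pow_sub₀ _ hPSne hp, pow_one, div_eq_mul_inv]
    have hRHS : ∏ j : Fin p, ∑ i' ∈ A.filter (fun i' => i' j = i0 j), π i'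
        = ∏ j : Fin p, (Cc * (F j (i0 j) * ∏ k ∈ Finset.univ.erase j, S k)) :=
      Finset.prod_congr rfl (fun j _ => by rw [hTj j, if_pos (hBj j)])
    have hR2 : ∏ j : Fin p, (Cc * (F j (i0 j) * ∏ k ∈ Finset.univ.erase j, S k))
        = Cc ^ p * ((∏ j : Fin p, F j (i0 j)) * (∏ k : Fin p, S k) ^ (p - 1)) := by
      rw [Finset.prod_mul_distrib, Finset.prod_mul_distrib, hprodprod,
        Finset.prod_const, Finset.card_univ, Fintype.card_fin]
    have hCp : Cc * Cc ^ (p - 1) = Cc ^ p := by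
      rw [← pow_succ', hp1]
    rw [if_pos hiA, one_mul, hπfact i0 hiA, hPAeq, hRHS, hR2, mul_pow, ← hCp]
    ring
  · rw [if_neg hiA, zero_mul, zero_mul]
    have hex : ∃ j, i0 j ∉ B j := by
      by_contra h
      push_neg at h
      exact hiA (by rw [hA', Fintype.mem_piFinset]; exact h)
    obtain ⟨j, hj⟩ := hex
    symm
    apply Finset.prod_eq_zero (Finset.mem_univ j)
    rw [hTj j, if_neg hj, zero_mul, mul_zero]
end

section
/- Let π be a probability tensor of dimensions d_1 × ⋯ × d_p and let {A_1, …, A_m} be a partition of the cell set ∏_{j=1}^p {1,…,d_j} such that for every h = 1,…,m and every cell i, 1_{A_h}(i) · π(i) · P(A_h)^{p−1} = ∏_{j=1}^p ( ∑_{i'∈A_h : i'_j = i_j} π(i') ), where P(A_h) = ∑_{i∈A_h} π(i) (i.e. the coordinates are conditionally independent given each block of the partition). Then rnk⁺_P(π) ≤ m. -/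
/-- If `π` is a probability tensor and `A 1, …, A m` is a partition of the cells such
that the coordinates are conditionally independent given each block — i.e. for every
block `A h` and cell `i`,
`1_{A h}(i) · π(i) · P(A h)^{p−1} = ∏_j (∑_{i' ∈ A h : i'_j = i_j} π(i'))`,
where `P(A h) = ∑_{i ∈ A h} π(i)` — then the nonnegative PARAFAC rank of `π` is at most
`m`. -/
theorem parafacRank_le_of_condIndep_partition {p : ℕ} {d : Fin p → ℕ}
    (π : ((j : Fin p) → Fin (d j)) → ℝ)
    (hnn : ∀ i, 0 ≤ π i) (hsum : ∑ i : (j : Fin p) → Fin (d j), π i = 1)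
    (m : ℕ) (A : Fin m → Finset ((j : Fin p) → Fin (d j)))
    (hdisj : ∀ h h', h ≠ h' → Disjoint (A h) (A h'))
    (hcover : ∀ i, ∃ h, i ∈ A h)
    (hCI : ∀ (h : Fin m) (i : (j : Fin p) → Fin (d j)),
      (if i ∈ A h then (1 : ℝ) else 0) * π i * (∑ i' ∈ A h, π i') ^ (p - 1) =
        ∏ j : Fin p, ∑ i' ∈ (A h).filter (fun i' => i' j = i j), π i') :
    parafacRank π ≤ m := by
  apply Nat.sInf_le
  refine ⟨fun h j c => (∑ i' ∈ (A h).filter (fun i' => i' j = c), π i') *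
      (if (j : ℕ) = 0 then ((∑ i' ∈ A h, π i') ^ (p - 1))⁻¹ else 1), ?_, ?_⟩
  · intro h j c
    apply mul_nonneg (Finset.sum_nonneg fun _ _ => hnn _)
    split
    · exact inv_nonneg.mpr (pow_nonneg (Finset.sum_nonneg fun _ _ => hnn _) _)
    · exact zero_le_one
  · intro i
    have key : ∀ h : Fin m, (∏ j : Fin p,
        (∑ i' ∈ (A h).filter (fun i' => i' j = i j), π i') *
          (if (j : ℕ) = 0 then ((∑ i' ∈ A h, π i') ^ (p - 1))⁻¹ else 1)) =
        if i ∈ A h then π i else 0 := by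
      intro h
      rw [Finset.prod_mul_distrib, ← hCI h i]
      have hprod : (∏ j : Fin p, if (j : ℕ) = 0 then ((∑ i' ∈ A h, π i') ^ (p - 1))⁻¹ else 1)
          = ((∑ i' ∈ A h, π i') ^ (p - 1))⁻¹ := by
        rcases Nat.eq_zero_or_pos p with hp | hp
        · subst hp; simp
        · have hiff : ∀ j : Fin p, ((j : ℕ) = 0) = (j = ⟨0, hp⟩) := fun j => by
            simp [Fin.ext_iff]
          simp only [hiff]
          rw [Finset.prod_ite_eq' Finset.univ (⟨0, hp⟩ : Fin p)
            (fun _ => ((∑ i' ∈ A h, π i') ^ (p - 1))⁻¹)]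
          simp
      rw [hprod]
      by_cases hs : (∑ i' ∈ A h, π i') ^ (p - 1) = 0
      · have hs0 : (∑ i' ∈ A h, π i') = 0 := by
          by_cases hp1 : p - 1 = 0
          · rw [hp1, pow_zero] at hs; norm_num at hs
          · exact pow_eq_zero_iff hp1 |>.mp hs
        have hzero : ∀ i' ∈ A h, π i' = 0 :=
          (Finset.sum_eq_zero_iff_of_nonneg (fun i' _ => hnn i')).mp hs0
        rw [hs]
        split_ifs with hm
        · rw [hzero i hm]; ring
        · ring
      · rw [mul_assoc, mul_assoc, mul_inv_cancel₀ hs, mul_one]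
        split_ifs with hm
        · rw [one_mul]
        · rw [zero_mul]
    rw [Finset.sum_congr rfl fun h _ => key h]
    obtain ⟨h0, hh0⟩ := hcover i
    rw [Finset.sum_eq_single h0]
    · rw [if_pos hh0]
    · intro b _ hb
      rw [if_neg]
      exact fun hmem => Finset.disjoint_left.mp (hdisj b h0 hb) hmem hh0
    · exact fun habs => absurd (Finset.mem_univ h0) habs
end
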